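/- arXiv:2106.10376 — 2 statements merged into one kernel-verified Lean document; each statement's English description precedes it below -/
import Mathlib

section
/- Let G be a finite connected simple graph, let μ be a pmf on the spanning trees of G, and let H be a vertex-induced subgraph of G with nonempty vertex set. Then ∑_{e ∈ E(H)} η_μ(e) ≤ |V(H)| − 1. Moreover, if H is connected, then equality holds if and only if every spanning tree γ with μ(γ) > 0 satisfies that γ ∩ E(H) is a spanning tree of H. -/
open scoped Classical

noncomputable section

variable {V : Type*} [Fintype V] [DecidableEq V]

/-- `T` is (the edge set of) a spanning tree of the vertex-induced subgraph of `G`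
on the vertex set `S`: its edges are edges of `G` with both endpoints in `S`,
it is acyclic, and every two vertices of `S` are joined by a path using edges of `T`. -/
def IsSpanningTreeOn (G : SimpleGraph V) (S : Finset V) (T : Finset (Sym2 V)) : Prop :=
  (↑T : Set (Sym2 V)) ⊆ G.edgeSet ∧ (∀ e ∈ T, ∀ v ∈ e, v ∈ S) ∧
    (SimpleGraph.fromEdgeSet (↑T : Set (Sym2 V))).IsAcyclic ∧
    ∀ u ∈ S, ∀ w ∈ S, (SimpleGraph.fromEdgeSet (↑T : Set (Sym2 V))).Reachable u w

/-- A probability mass function on the spanning trees of the induced subgraph of `G` on `S`. -/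
structure TreePMFOn (G : SimpleGraph V) (S : Finset V) where
  toFun : Finset (Sym2 V) → ℝ
  nonneg : ∀ T, 0 ≤ toFun T
  supp : ∀ T, toFun T ≠ 0 → IsSpanningTreeOn G S T
  sum_one : ∑ T : Finset (Sym2 V), toFun T = 1

/-- Edge probability `η_μ(e)`. -/
def edgeProbOn {G : SimpleGraph V} {S : Finset V} (μ : TreePMFOn G S) (e : Sym2 V) : ℝ :=
  ∑ T : Finset (Sym2 V), if e ∈ T then μ.toFun T else 0

/-- Edges of `G` with both endpoints in `S`. -/
def inducedEdges (G : SimpleGraph V) (S : Finset V) : Finset (Sym2 V) :=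
  G.edgeFinset.filter fun e => ∀ v ∈ e, v ∈ S

/-- Variance of the edge probabilities of `μ` over the edges within `S`. -/
def edgeVarOn {G : SimpleGraph V} {S : Finset V} (μ : TreePMFOn G S) : ℝ :=
  (∑ e ∈ inducedEdges G S, (edgeProbOn μ e) ^ 2) / ((inducedEdges G S).card : ℝ) -
    ((∑ e ∈ inducedEdges G S, edgeProbOn μ e) / ((inducedEdges G S).card : ℝ)) ^ 2

/-- A pmf is fair if it minimizes the variance of the edge probabilities. -/
def IsFairOn {G : SimpleGraph V} {S : Finset V} (μ : TreePMFOn G S) : Prop :=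
  ∀ ν : TreePMFOn G S, edgeVarOn μ ≤ edgeVarOn ν

/-- A fair tree: a spanning tree in the support of some fair pmf. -/
def IsFairTreeOn (G : SimpleGraph V) (S : Finset V) (T : Finset (Sym2 V)) : Prop :=
  ∃ μ : TreePMFOn G S, IsFairOn μ ∧ μ.toFun T ≠ 0

/-- The 1-density `θ(H) = |E(H)|/(|V(H)|-1)` of the induced subgraph on `S`. -/
def density (G : SimpleGraph V) (S : Finset V) : ℝ :=
  ((inducedEdges G S).card : ℝ) / ((S.card : ℝ) - 1)

/-- `S` induces a member of `H(G)`: connected, vertex-induced, with at least one edge. -/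
def InH (G : SimpleGraph V) (S : Finset V) : Prop :=
  (inducedEdges G S).Nonempty ∧ (G.induce (↑S : Set V)).Connected

/-- `S` induces a 1-densest subgraph of `G`. -/
def IsDensest (G : SimpleGraph V) (S : Finset V) : Prop :=
  InH G S ∧ ∀ S' : Finset V, InH G S' → density G S' ≤ density G S

/-- `S` induces a minimal 1-densest subgraph of `G`. -/
def IsMinimalDensest (G : SimpleGraph V) (S : Finset V) : Prop :=
  IsDensest G S ∧ ∀ S' : Finset V, S' ⊆ S → S' ≠ S → ¬ IsDensest G S'

/-- The induced subgraph on `S` is homogeneous: some pmf on its spanning trees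
has constant edge probabilities. -/
def IsHomogeneousOn (G : SimpleGraph V) (S : Finset V) : Prop :=
  ∃ μ : TreePMFOn G S, ∃ c : ℝ, ∀ e ∈ inducedEdges G S, edgeProbOn μ e = c

/-- The induced subgraph on `S` has the strict 1-density property. -/
def StrictDensityOn (G : SimpleGraph V) (S : Finset V) : Prop :=
  ∀ S' : Finset V, S' ⊆ S → InH G S' → S' ≠ S → density G S' < density G S

/-! Every tree `T` in the support of `μ` meets `E(H)` in a forest on `V(H)`. Such a forest has at
most `|V(H)| - 1` edges, with equality exactly when it is a spanning tree of `H`: extend it to a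
spanning tree of the complete graph on `V(H)` and compare edge counts. The sum of the edge
probabilities over `E(H)` is the `μ`-average of `|T ∩ E(H)|`, which gives the bound and its
equality case at once. -/

open scoped Finset

namespace SimpleGraph

variable {W : Type*} {F : SimpleGraph W}

theorem IsAcyclic.exists_isTree_ge [Nonempty W] (hF : F.IsAcyclic) : ∃ T, F ≤ T ∧ T.IsTree := by
  obtain ⟨T, hFT, -, hT, hreach⟩ :=
    exists_isAcyclic_reachable_eq_le_of_le_of_isAcyclic (G := ⊤) le_top hF
  refine ⟨T, hFT, ⟨?_, hT⟩⟩
  have htop : (⊤ : SimpleGraph W).Connected := connected_top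
  rw [connected_iff, preconnected_iff_reachable_eq_top, ← hreach] at htop
  rwa [connected_iff, preconnected_iff_reachable_eq_top]

theorem Reachable.induce_of_support_subset {s : Set W} (hs : F.support ⊆ s) {u v : W}
    (hu : u ∈ s) (hv : v ∈ s) (h : F.Reachable u v) :
    (F.induce s).Reachable ⟨u, hu⟩ ⟨v, hv⟩ := by
  obtain ⟨p⟩ := h
  by_cases hp : p.Nil
  · cases hp.eq
    rfl
  · exact ⟨p.induce s fun x hx => hs (mem_support_of_mem_walk_support p hp hx)⟩

variable [Fintype W] [Fintype F.edgeSet]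

theorem IsAcyclic.card_edgeFinset_add_one_le [Nonempty W] (hF : F.IsAcyclic) :
    #F.edgeFinset + 1 ≤ Fintype.card W := by
  obtain ⟨T, hFT, hT⟩ := hF.exists_isTree_ge
  rw [← hT.card_edgeFinset]
  gcongr

theorem IsAcyclic.isTree_of_card_edgeFinset (hF : F.IsAcyclic)
    (hcard : #F.edgeFinset + 1 = Fintype.card W) : F.IsTree := by
  have : Nonempty W := Fintype.card_pos_iff.mp (by omega)
  obtain ⟨T, hFT, hT⟩ := hF.exists_isTree_ge
  have hsub : F.edgeFinset ⊆ T.edgeFinset := edgeFinset_subset_edgeFinset.mpr hFT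
  have : F.edgeFinset = T.edgeFinset :=
    Finset.eq_of_subset_of_card_le hsub (by rw [← hT.card_edgeFinset] at hcard; omega)
  exact edgeFinset_inj.mp this ▸ hT

variable {s : Finset W}

theorem card_edgeFinset_induce_coe_of_support_subset (hsupp : F.support ⊆ s) :
    #(F.induce s).edgeFinset = #F.edgeFinset := by
  convert card_edgeFinset_induce_of_support_subset hsupp

theorem IsAcyclic.card_edgeFinset_add_one_le_of_support_subset (hF : F.IsAcyclic)
    (hs : s.Nonempty) (hsupp : F.support ⊆ s) : #F.edgeFinset + 1 ≤ #s := by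
  have : Nonempty (s : Set W) := hs.to_set.to_subtype
  have := (hF.induce s).card_edgeFinset_add_one_le
  simpa [card_edgeFinset_induce_coe_of_support_subset hsupp] using this

theorem IsAcyclic.reachable_of_card_edgeFinset_add_one_eq (hF : F.IsAcyclic)
    (hsupp : F.support ⊆ s) (hcard : #F.edgeFinset + 1 = #s) {u v : W} (hu : u ∈ s)
    (hv : v ∈ s) : F.Reachable u v := by
  have htree : (F.induce s).IsTree := by
    refine (hF.induce s).isTree_of_card_edgeFinset ?_
    simpa [card_edgeFinset_induce_coe_of_support_subset hsupp] using hcard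
  exact (htree.connected.preconnected ⟨u, hu⟩ ⟨v, hv⟩).map (Embedding.induce _).toHom

theorem IsAcyclic.card_edgeFinset_add_one_eq_of_reachable (hF : F.IsAcyclic)
    (hs : s.Nonempty) (hsupp : F.support ⊆ s)
    (hreach : ∀ u ∈ s, ∀ v ∈ s, F.Reachable u v) : #F.edgeFinset + 1 = #s := by
  have : Nonempty (s : Set W) := hs.to_set.to_subtype
  have htree : (F.induce s).IsTree :=
    ⟨⟨fun ⟨u, hu⟩ ⟨v, hv⟩ => (hreach u hu v hv).induce_of_support_subset hsupp hu hv⟩,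
      hF.induce s⟩
  have := htree.card_edgeFinset
  simpa [card_edgeFinset_induce_coe_of_support_subset hsupp] using this

end SimpleGraph

theorem mul_le_mul_of_nonneg_of_ne_zero_imp_le {α : Type*} [Semiring α] [PartialOrder α]
    [IsOrderedRing α] {a b c : α} (ha : 0 ≤ a) (h : a ≠ 0 → b ≤ c) : a * b ≤ a * c := by
  rcases eq_or_ne a 0 with rfl | ha₀
  · simp
  · exact mul_le_mul_of_nonneg_left (h ha₀) ha

section WeightedAverage

variable {ι α : Type*} [Fintype ι] [CommRing α] [LinearOrder α] [IsStrictOrderedRing α]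
  {w f : ι → α} {c : α}

theorem sum_mul_le_of_forall_ne_zero_imp_le (hw : ∀ i, 0 ≤ w i) (hw₁ : ∑ i, w i = 1)
    (hf : ∀ i, w i ≠ 0 → f i ≤ c) : ∑ i, w i * f i ≤ c :=
  calc ∑ i, w i * f i ≤ ∑ i, w i * c :=
        Finset.sum_le_sum fun i _ => mul_le_mul_of_nonneg_of_ne_zero_imp_le (hw i) (hf i)
    _ = c := by rw [← Finset.sum_mul, hw₁, one_mul]

theorem sum_mul_eq_iff_of_forall_ne_zero_imp_le (hw : ∀ i, 0 ≤ w i) (hw₁ : ∑ i, w i = 1)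
    (hf : ∀ i, w i ≠ 0 → f i ≤ c) : ∑ i, w i * f i = c ↔ ∀ i, w i ≠ 0 → f i = c := by
  have hc : ∑ i, w i * c = c := by rw [← Finset.sum_mul, hw₁, one_mul]
  conv_lhs => rw [← hc]
  rw [Finset.sum_eq_sum_iff_of_le fun i _ =>
    mul_le_mul_of_nonneg_of_ne_zero_imp_le (hw i) (hf i)]
  simp only [Finset.mem_univ, true_implies, mul_eq_mul_left_iff, or_iff_not_imp_right]

end WeightedAverage

section SpanningTrees

open SimpleGraph

variable {W : Type*} {G : SimpleGraph W} {S : Finset W} {T : Finset (Sym2 W)}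

def IsForestOn (G : SimpleGraph W) (S : Finset W) (T : Finset (Sym2 W)) : Prop :=
  (↑T : Set (Sym2 W)) ⊆ G.edgeSet ∧ (∀ e ∈ T, ∀ v ∈ e, v ∈ S) ∧
    (fromEdgeSet (↑T : Set (Sym2 W))).IsAcyclic

theorem IsSpanningTreeOn.isForestOn_filter {S' : Finset W} (hT : IsSpanningTreeOn G S' T)
    (S : Finset W) [DecidablePred fun e : Sym2 W => ∀ v ∈ e, v ∈ S] :
    IsForestOn G S (T.filter fun e => ∀ v ∈ e, v ∈ S) :=
  have hsub : (↑(T.filter fun e => ∀ v ∈ e, v ∈ S) : Set (Sym2 W)) ⊆ ↑T := by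
    exact_mod_cast Finset.filter_subset _ _
  ⟨hsub.trans hT.1, fun _ he => (Finset.mem_filter.mp he).2,
    hT.2.2.1.anti (fromEdgeSet_mono hsub)⟩

theorem edgeFinset_fromEdgeSet_of_subset_edgeSet
    [Fintype (fromEdgeSet (↑T : Set (Sym2 W))).edgeSet] (hT : (↑T : Set (Sym2 W)) ⊆ G.edgeSet) :
    (fromEdgeSet (↑T : Set (Sym2 W))).edgeFinset = T := by
  refine Finset.coe_injective ?_
  rw [coe_edgeFinset, edgeSet_fromEdgeSet, sdiff_eq_left]
  exact Set.disjoint_left.mpr fun e he => G.not_isDiag_of_mem_edgeSet (hT he)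

theorem support_fromEdgeSet_subset (hT : ∀ e ∈ T, ∀ v ∈ e, v ∈ S) :
    (fromEdgeSet (↑T : Set (Sym2 W))).support ⊆ S := by
  rintro v ⟨w, hvw⟩
  exact hT _ ((fromEdgeSet_adj _).mp hvw).1 v (Sym2.mem_mk_left v w)

variable [Fintype W]

theorem IsForestOn.card_add_one_le (hT : IsForestOn G S T) (hS : S.Nonempty) : #T + 1 ≤ #S := by
  have := hT.2.2.card_edgeFinset_add_one_le_of_support_subset hS
    (support_fromEdgeSet_subset hT.2.1)
  rwa [edgeFinset_fromEdgeSet_of_subset_edgeSet hT.1] at this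

theorem IsForestOn.isSpanningTreeOn_iff (hT : IsForestOn G S T) (hS : S.Nonempty) :
    IsSpanningTreeOn G S T ↔ #T + 1 = #S := by
  obtain ⟨hG, hsub, hac⟩ := hT
  have hsupp := support_fromEdgeSet_subset hsub
  have hE := edgeFinset_fromEdgeSet_of_subset_edgeSet hG
  constructor
  · rintro ⟨-, -, -, hreach⟩
    simpa [hE] using hac.card_edgeFinset_add_one_eq_of_reachable hS hsupp hreach
  · intro hcard
    refine ⟨hG, hsub, hac, fun u hu v hv => ?_⟩
    exact hac.reachable_of_card_edgeFinset_add_one_eq hsupp (by rwa [hE]) hu hv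

end SpanningTrees

theorem sum_edgeProbOn_inducedEdges {G : SimpleGraph V} {S' : Finset V} (μ : TreePMFOn G S')
    (S : Finset V) :
    ∑ e ∈ inducedEdges G S, edgeProbOn μ e =
      ∑ T : Finset (Sym2 V), μ.toFun T * #(T.filter fun e => ∀ v ∈ e, v ∈ S) := by
  unfold edgeProbOn
  rw [Finset.sum_comm]
  refine Finset.sum_congr rfl fun T _ => ?_
  rw [← Finset.sum_filter, Finset.sum_const, nsmul_eq_mul, mul_comm]
  by_cases hT : μ.toFun T = 0
  · simp [hT]
  have hTG := (μ.supp T hT).1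
  congr 3
  ext e
  simp only [inducedEdges, Finset.mem_filter, SimpleGraph.mem_edgeFinset]
  exact ⟨fun ⟨⟨_, he⟩, heT⟩ => ⟨heT, he⟩, fun ⟨heT, he⟩ => ⟨⟨hTG heT, he⟩, heT⟩⟩

theorem sum_edgeProb_le_card_sub_one_general
    {V : Type*} [Fintype V] [DecidableEq V] (G : SimpleGraph V)
    (μ : TreePMFOn G Finset.univ) (S : Finset V) (hS : S.Nonempty) :
    (∑ e ∈ inducedEdges G S, edgeProbOn μ e) ≤ (S.card : ℝ) - 1 ∧
    ((G.induce (↑S : Set V)).Connected →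
      ((∑ e ∈ inducedEdges G S, edgeProbOn μ e) = (S.card : ℝ) - 1 ↔
        ∀ T : Finset (Sym2 V), μ.toFun T ≠ 0 →
          IsSpanningTreeOn G S (T.filter fun e => ∀ v ∈ e, v ∈ S))) := by
  have hforest T (hT : μ.toFun T ≠ 0) := (μ.supp T hT).isForestOn_filter S
  have hle T (hT : μ.toFun T ≠ 0) :
      (#(T.filter fun e => ∀ v ∈ e, v ∈ S) : ℝ) ≤ #S - 1 := by
    have := (hforest T hT).card_add_one_le hS
    rw [le_sub_iff_add_le]
    exact_mod_cast this
  have htree T (hT : μ.toFun T ≠ 0) :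
      (#(T.filter fun e => ∀ v ∈ e, v ∈ S) : ℝ) = #S - 1 ↔
        IsSpanningTreeOn G S (T.filter fun e => ∀ v ∈ e, v ∈ S) := by
    rw [(hforest T hT).isSpanningTreeOn_iff hS, eq_sub_iff_add_eq]
    exact_mod_cast Iff.rfl
  rw [sum_edgeProbOn_inducedEdges]
  refine ⟨sum_mul_le_of_forall_ne_zero_imp_le μ.nonneg μ.sum_one hle, fun _ => ?_⟩
  rw [sum_mul_eq_iff_of_forall_ne_zero_imp_le μ.nonneg μ.sum_one hle]
  exact forall₂_congr htree

/-- For a pmf `μ` on the spanning trees of a finite connected simple graph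
`G` and a nonempty vertex set `S`, the sum of the edge probabilities over the edges within
`S` is at most `|S| - 1`; and if the induced subgraph on `S` is connected, equality holds
iff every tree in the support of `μ` restricts to a spanning tree of the induced subgraph. -/
theorem sum_edgeProb_le_card_sub_one
    {V : Type*} [Fintype V] [DecidableEq V] (G : SimpleGraph V) (hG : G.Connected)
    (μ : TreePMFOn G Finset.univ) (S : Finset V) (hS : S.Nonempty) :
    (∑ e ∈ inducedEdges G S, edgeProbOn μ e) ≤ (S.card : ℝ) - 1 ∧
    ((G.induce (↑S : Set V)).Connected →
      ((∑ e ∈ inducedEdges G S, edgeProbOn μ e) = (S.card : ℝ) - 1 ↔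
        ∀ T : Finset (Sym2 V), μ.toFun T ≠ 0 →
          IsSpanningTreeOn G S (T.filter fun e => ∀ v ∈ e, v ∈ S))) :=
  sum_edgeProb_le_card_sub_one_general G μ S hS
end
end

section
/- Let m,n ≥ 1 be integers, let H be a vertex-induced subgraph of the grid graph G_{m,n} that is connected and has at least one edge, and let t be a vertex of G_{m,n} not in V(H) that is adjacent in G_{m,n} to at least two vertices of V(H). Then the vertex-induced subgraph H' on V(H) ∪ {t} satisfies θ(H') > θ(H). -/
open scoped Classical

noncomputable section

/-- The `m`-by-`n` grid graph: vertices are pairs in `Fin m × Fin n`, and two vertices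
are adjacent iff they agree in one coordinate and differ by exactly one in the other
(the box product of two path graphs). -/
def gridGraph (m n : ℕ) : SimpleGraph (Fin m × Fin n) :=
  SimpleGraph.fromRel fun v w =>
    (v.1 = w.1 ∧ v.2.val + 1 = w.2.val) ∨ (v.2 = w.2 ∧ v.1.val + 1 = w.1.val)

variable {V : Type*} [Fintype V] [DecidableEq V]

namespace GridAux

variable {m n : ℕ}

/-- Orientation function: sends an (unordered) grid edge to its larger endpoint together
with a bit telling whether the edge is vertical. -/
def dirFun (v w : Fin m × Fin n) : (Fin m × Fin n) × Bool :=
  if v.1 = w.1 then (if v.2.val ≤ w.2.val then w else v, false)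
  else (if v.1.val ≤ w.1.val then w else v, true)

lemma dirFun_symm (v w : Fin m × Fin n) : dirFun v w = dirFun w v := by
  unfold dirFun
  rcases eq_or_ne v.1 w.1 with h | h
  · rw [if_pos h, if_pos h.symm]
    rcases le_or_gt v.2.val w.2.val with h2 | h2
    · rcases le_or_gt w.2.val v.2.val with h3 | h3
      · have : v = w := by
          apply Prod.ext h (Fin.ext (le_antisymm h2 h3))
        simp [this]
      · rw [if_pos h2, if_neg (not_le.mpr h3)]
    · rw [if_neg (not_le.mpr h2), if_pos h2.le]
  · rw [if_neg h, if_neg h.symm]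
    have hne : v.1.val ≠ w.1.val := fun hc => h (Fin.ext hc)
    rcases lt_or_gt_of_ne hne with h2 | h2
    · rw [if_pos h2.le, if_neg (not_le.mpr h2)]
    · rw [if_neg (not_le.mpr h2), if_pos h2.le]


/-- The orientation map on unordered edges. -/
def g : Sym2 (Fin m × Fin n) → (Fin m × Fin n) × Bool :=
  Sym2.lift ⟨dirFun, dirFun_symm⟩

lemma g_mk (v w : Fin m × Fin n) : g s(v, w) = dirFun v w := rfl

/-- Structure of an induced edge: representation with the oriented relation. -/
lemma edge_repr {S : Finset (Fin m × Fin n)} {e : Sym2 (Fin m × Fin n)}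
    (he : e ∈ inducedEdges (gridGraph m n) S) :
    ∃ p q, p ∈ S ∧ q ∈ S ∧ e = s(p, q) ∧
      ((p.1 = q.1 ∧ p.2.val + 1 = q.2.val) ∨ (p.2 = q.2 ∧ p.1.val + 1 = q.1.val)) := by
  rw [inducedEdges, Finset.mem_filter, SimpleGraph.mem_edgeFinset] at he
  obtain ⟨he1, he2⟩ := he
  induction e with
  | _ x y =>
    rw [SimpleGraph.mem_edgeSet, gridGraph, SimpleGraph.fromRel_adj] at he1
    obtain ⟨hne, hrel | hrel⟩ := he1
    · exact ⟨x, y, he2 x (Sym2.mem_mk_left x y), he2 y (Sym2.mem_mk_right x y), rfl, hrel⟩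
    · exact ⟨y, x, he2 y (Sym2.mem_mk_right x y), he2 x (Sym2.mem_mk_left x y),
        Sym2.eq_swap.symm, hrel⟩

lemma g_of_rel {p q : Fin m × Fin n}
    (h : (p.1 = q.1 ∧ p.2.val + 1 = q.2.val) ∨ (p.2 = q.2 ∧ p.1.val + 1 = q.1.val)) :
    g s(p, q) = (q, if p.1 = q.1 then false else true) := by
  rw [g_mk, dirFun]
  rcases h with ⟨h1, h2⟩ | ⟨h1, h2⟩
  · rw [if_pos h1, if_pos h1, if_pos (by omega)]
  · have hne : p.1 ≠ q.1 := fun hc => by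
      have := congrArg Fin.val hc; omega
    rw [if_neg hne, if_neg hne, if_pos (by omega)]

/-- The key spec of `g` on induced edges. -/
lemma g_spec {S : Finset (Fin m × Fin n)} {e : Sym2 (Fin m × Fin n)}
    (he : e ∈ inducedEdges (gridGraph m n) S) :
    ∃ p, p ∈ S ∧ (g e).1 ∈ S ∧ e = s(p, (g e).1) ∧
      (if (g e).2 then p.2 = (g e).1.2 ∧ p.1.val + 1 = (g e).1.1.val
       else p.1 = (g e).1.1 ∧ p.2.val + 1 = (g e).1.2.val) := by
  obtain ⟨p, q, hp, hq, rfl, hrel⟩ := edge_repr he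
  rw [g_of_rel hrel]
  rcases hrel with ⟨h1, h2⟩ | ⟨h1, h2⟩
  · refine ⟨p, hp, hq, rfl, ?_⟩
    simp [h1, h2]
  · have hne : p.1 ≠ q.1 := fun hc => by
      have := congrArg Fin.val hc; omega
    refine ⟨p, hp, hq, rfl, ?_⟩
    simp [hne, h1, h2]


lemma g_injOn {S : Finset (Fin m × Fin n)} {e1 e2 : Sym2 (Fin m × Fin n)}
    (h1 : e1 ∈ inducedEdges (gridGraph m n) S) (h2 : e2 ∈ inducedEdges (gridGraph m n) S)
    (hg : g e1 = g e2) : e1 = e2 := by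
  obtain ⟨p1, hp1, hw1, he1, hc1⟩ := g_spec h1
  obtain ⟨p2, hp2, hw2, he2, hc2⟩ := g_spec h2
  rw [hg] at hc1 he1
  have hp : p1 = p2 := by
    rcases Bool.eq_false_or_eq_true (g e2).2 with hb | hb <;> rw [hb] at hc1 hc2 <;>
      simp only [Bool.false_eq_true, if_false, if_true] at hc1 hc2 <;>
      obtain ⟨ha1, ha2⟩ := hc1 <;> obtain ⟨hb1, hb2⟩ := hc2
    · exact Prod.ext (Fin.ext (by omega)) (by rw [ha1, hb1])
    · exact Prod.ext (by rw [ha1, hb1]) (Fin.ext (by omega))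
  rw [he1, hp]
  exact he2.symm

/-- Whether `w` has an `S`-predecessor in direction `d`. -/
def HasPred (S : Finset (Fin m × Fin n)) (w : Fin m × Fin n) (d : Bool) : Prop :=
  ∃ p ∈ S, if d then p.2 = w.2 ∧ p.1.val + 1 = w.1.val
           else p.1 = w.1 ∧ p.2.val + 1 = w.2.val

/-- The coordinate sum. -/
def csum (v : Fin m × Fin n) : ℕ := v.1.val + v.2.val

lemma csum_of_pred {S : Finset (Fin m × Fin n)} {w p : Fin m × Fin n} {d : Bool}
    (hp : if d then p.2 = w.2 ∧ p.1.val + 1 = w.1.val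
          else p.1 = w.1 ∧ p.2.val + 1 = w.2.val) : csum p + 1 = csum w := by
  rcases Bool.eq_false_or_eq_true d with hb | hb <;> rw [hb] at hp <;>
    simp only [Bool.false_eq_true, if_false, if_true] at hp <;>
    obtain ⟨h1, h2⟩ := hp <;> have h3 := congrArg Fin.val h1 <;> unfold csum <;> omega

/-- The edge-count bound: an induced subgraph of the grid on `s ≥ 2` vertices
has at most `2s - 3` edges. -/
lemma card_inducedEdges_le {S : Finset (Fin m × Fin n)} (hS : 2 ≤ S.card) :
    (inducedEdges (gridGraph m n) S).card + 3 ≤ 2 * S.card := by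
  -- the two minimal-sum vertices
  obtain ⟨a, haS, hamin⟩ := Finset.exists_min_image S csum (Finset.card_pos.mp (by omega))
  have herase : (S.erase a).Nonempty := by
    rw [← Finset.card_pos, Finset.card_erase_of_mem haS]; omega
  obtain ⟨b, hbS', hbmin⟩ := Finset.exists_min_image (S.erase a) csum herase
  have hbS : b ∈ S := Finset.mem_of_mem_erase hbS'
  have hba : b ≠ a := Finset.ne_of_mem_erase hbS'
  -- a has no predecessor in either direction
  have hanp : ∀ d, ¬ HasPred S a d := by
    intro d ⟨p, hpS, hp⟩
    have h1 := csum_of_pred (S := S) (w := a) hp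
    have := hamin p hpS
    omega
  -- b misses a predecessor in at least one direction
  have hbnp : ∃ d, ¬ HasPred S b d := by
    by_contra hc
    push_neg at hc
    obtain ⟨p, hpS, hp⟩ := hc false
    obtain ⟨q, hqS, hq⟩ := hc true
    have hcp := csum_of_pred (S := S) (w := b) (d := false) hp
    have hcq := csum_of_pred (S := S) (w := b) (d := true) hq
    simp only [Bool.false_eq_true, if_false, if_true] at hp hq
    obtain ⟨hp1, hp2⟩ := hp
    obtain ⟨hq1, hq2⟩ := hq
    have hpq : p ≠ q := by
      intro h; rw [h] at hp1
      have h1 := congrArg Fin.val hq1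
      have h2 := congrArg Fin.val hp1
      omega
    have hpa : p = a := by
      by_contra h
      have := hbmin p (Finset.mem_erase.mpr ⟨h, hpS⟩)
      omega
    have hqa : q = a := by
      by_contra h
      have := hbmin q (Finset.mem_erase.mpr ⟨h, hqS⟩)
      omega
    exact hpq (hpa.trans hqa.symm)
  obtain ⟨d0, hd0⟩ := hbnp
  -- the target set
  set T : Finset ((Fin m × Fin n) × Bool) :=
    (((S ×ˢ (Finset.univ : Finset Bool)).erase (a, false)).erase (a, true)).erase (b, d0)
    with hT
  have hmaps : ∀ e ∈ inducedEdges (gridGraph m n) S, g e ∈ T := by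
    intro e he
    obtain ⟨p, hpS, hwS, hrepr, hcond⟩ := g_spec he
    have hpred : HasPred S (g e).1 (g e).2 := ⟨p, hpS, hcond⟩
    rw [hT]
    refine Finset.mem_erase.mpr ⟨?_, Finset.mem_erase.mpr ⟨?_, Finset.mem_erase.mpr
      ⟨?_, Finset.mem_product.mpr ⟨hwS, Finset.mem_univ _⟩⟩⟩⟩
    · intro h
      exact hd0 (by rw [show (g e).1 = b from congrArg Prod.fst h,
        show (g e).2 = d0 from congrArg Prod.snd h] at hpred; exact hpred)
    · intro h
      exact hanp true (by rw [show (g e).1 = a from congrArg Prod.fst h,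
        show (g e).2 = true from congrArg Prod.snd h] at hpred; exact hpred)
    · intro h
      exact hanp false (by rw [show (g e).1 = a from congrArg Prod.fst h,
        show (g e).2 = false from congrArg Prod.snd h] at hpred; exact hpred)
  have hcard_le : (inducedEdges (gridGraph m n) S).card ≤ T.card :=
    Finset.card_le_card_of_injOn g hmaps (fun e1 h1 e2 h2 => g_injOn h1 h2)
  have hTcard : T.card = 2 * S.card - 3 := by
    rw [hT]
    rw [Finset.card_erase_of_mem, Finset.card_erase_of_mem, Finset.card_erase_of_mem]
    · rw [Finset.card_product]
      simp only [Finset.card_univ, Fintype.card_bool]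
      omega
    · exact Finset.mem_product.mpr ⟨haS, Finset.mem_univ _⟩
    · refine Finset.mem_erase.mpr ⟨by simp, Finset.mem_product.mpr ⟨haS, Finset.mem_univ _⟩⟩
    · refine Finset.mem_erase.mpr ⟨by simp [hba], Finset.mem_erase.mpr
        ⟨by simp [hba], Finset.mem_product.mpr ⟨hbS, Finset.mem_univ _⟩⟩⟩
  omega

end GridAux

theorem density_key (m n : ℕ) (hm : 1 ≤ m) (hn : 1 ≤ n)
    (S : Finset (Fin m × Fin n))
    (hconn : ((gridGraph m n).induce (↑S : Set (Fin m × Fin n))).Connected)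
    (hedge : (inducedEdges (gridGraph m n) S).Nonempty)
    (t : Fin m × Fin n) (ht : t ∉ S)
    (hadj : ∃ u ∈ S, ∃ v ∈ S, u ≠ v ∧ (gridGraph m n).Adj t u ∧ (gridGraph m n).Adj t v) :
    ((inducedEdges (gridGraph m n) S).card : ℝ) / ((S.card : ℝ) - 1) <
      ((inducedEdges (gridGraph m n) (insert t S)).card : ℝ) / (((insert t S).card : ℝ) - 1) := by
  classical
  obtain ⟨u, hu, v, hv, huv, htu, htv⟩ := hadj
  have hs2 : 2 ≤ S.card := Finset.one_lt_card.mpr ⟨u, hu, v, hv, huv⟩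
  have hbound := GridAux.card_inducedEdges_le hs2
  have htu' : t ≠ u := (gridGraph m n).ne_of_adj htu
  have htv' : t ≠ v := (gridGraph m n).ne_of_adj htv
  have hmem_u : s(t, u) ∈ inducedEdges (gridGraph m n) (insert t S) := by
    rw [inducedEdges, Finset.mem_filter, SimpleGraph.mem_edgeFinset, SimpleGraph.mem_edgeSet]
    refine ⟨htu, fun w hw => ?_⟩
    rcases Sym2.mem_iff.mp hw with rfl | rfl
    · exact Finset.mem_insert_self _ _
    · exact Finset.mem_insert_of_mem hu
  have hmem_v : s(t, v) ∈ inducedEdges (gridGraph m n) (insert t S) := by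
    rw [inducedEdges, Finset.mem_filter, SimpleGraph.mem_edgeFinset, SimpleGraph.mem_edgeSet]
    refine ⟨htv, fun w hw => ?_⟩
    rcases Sym2.mem_iff.mp hw with rfl | rfl
    · exact Finset.mem_insert_self _ _
    · exact Finset.mem_insert_of_mem hv
  have hsub : inducedEdges (gridGraph m n) S ⊆ inducedEdges (gridGraph m n) (insert t S) := by
    intro e he
    rw [inducedEdges, Finset.mem_filter] at he ⊢
    exact ⟨he.1, fun w hw => Finset.mem_insert_of_mem (he.2 w hw)⟩
  have hnot_u : s(t, u) ∉ inducedEdges (gridGraph m n) S := by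
    rw [inducedEdges, Finset.mem_filter]
    rintro ⟨-, h⟩
    exact ht (h t (Sym2.mem_mk_left t u))
  have hnot_v : s(t, v) ∉ inducedEdges (gridGraph m n) S := by
    rw [inducedEdges, Finset.mem_filter]
    rintro ⟨-, h⟩
    exact ht (h t (Sym2.mem_mk_left t v))
  have hne_uv : s(t, u) ≠ s(t, v) := by
    intro h
    rcases Sym2.eq_iff.mp h with ⟨-, h2⟩ | ⟨h1, -⟩
    · exact huv h2
    · exact htv' h1
  have hsubset2 : insert s(t, u) (insert s(t, v) (inducedEdges (gridGraph m n) S)) ⊆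
      inducedEdges (gridGraph m n) (insert t S) := by
    intro e he
    rcases Finset.mem_insert.mp he with rfl | he
    · exact hmem_u
    rcases Finset.mem_insert.mp he with rfl | he
    · exact hmem_v
    exact hsub he
  have hcard2 : (inducedEdges (gridGraph m n) S).card + 2 ≤
      (inducedEdges (gridGraph m n) (insert t S)).card := by
    have h1 : (insert s(t, u) (insert s(t, v) (inducedEdges (gridGraph m n) S))).card =
        (inducedEdges (gridGraph m n) S).card + 2 := by
      rw [Finset.card_insert_of_notMem, Finset.card_insert_of_notMem hnot_v]
      intro h
      rcases Finset.mem_insert.mp h with h | h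
      · exact hne_uv h
      · exact hnot_u h
    rw [← h1]
    exact Finset.card_le_card hsubset2
  have hci : (insert t S).card = S.card + 1 := Finset.card_insert_of_notMem ht
  have h1 : (0 : ℝ) < (S.card : ℝ) - 1 := by
    have : (2 : ℝ) ≤ (S.card : ℝ) := by exact_mod_cast hs2
    linarith
  have h2 : (0 : ℝ) < ((insert t S).card : ℝ) - 1 := by
    rw [hci]; push_cast; linarith
  rw [div_lt_div_iff₀ h1 h2, hci]
  have hb' : ((inducedEdges (gridGraph m n) S).card : ℝ) + 3 ≤ 2 * (S.card : ℝ) := by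
    exact_mod_cast hbound
  have hc' : ((inducedEdges (gridGraph m n) S).card : ℝ) + 2 ≤
      ((inducedEdges (gridGraph m n) (insert t S)).card : ℝ) := by exact_mod_cast hcard2
  push_cast
  nlinarith [mul_le_mul_of_nonneg_right hc' (by linarith : (0 : ℝ) ≤ (S.card : ℝ) - 1)]

/-- if `H` is a connected vertex-induced subgraph (with at least one edge)
of the grid graph, and `t ∉ V(H)` is adjacent to at least two vertices of `H`, then the
vertex-induced subgraph on `V(H) ∪ {t}` has strictly larger 1-density. -/
theorem density_lt_insert_of_two_neighbors (m n : ℕ) (hm : 1 ≤ m) (hn : 1 ≤ n)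
    (S : Finset (Fin m × Fin n))
    (hconn : ((gridGraph m n).induce (↑S : Set (Fin m × Fin n))).Connected)
    (hedge : (inducedEdges (gridGraph m n) S).Nonempty)
    (t : Fin m × Fin n) (ht : t ∉ S)
    (hadj : ∃ u ∈ S, ∃ v ∈ S, u ≠ v ∧ (gridGraph m n).Adj t u ∧ (gridGraph m n).Adj t v) :
    density (gridGraph m n) S < density (gridGraph m n) (insert t S) := by
  unfold density
  exact density_key m n hm hn S hconn hedge t ht hadj
end
end
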